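/- arXiv:2110.09645 — 3 statements merged into one kernel-verified Lean document; each statement's English description precedes it below -/
import Mathlib

section
/- With the notation of the selection-matrix construction: let Σ be K×K positive definite, M a random binary vector with P(M = 1_K) > 0, and V_M(Σ) as defined. Then e_K^T E[V_M(Σ)]^{-1} e_K ≤ P(M_K = 1)^{-1} · e_K^T Σ e_K. -/
open Matrix BigOperators Finset

/-- The `K × n_m` selection matrix `D_m` whose columns are the standard basis vectors
`e_t` for the indices `t` with `m t = true` (columns indexed by the subtype of such `t`). -/
noncomputable def selMat (K : ℕ) (m : Fin K → Bool) :
    Matrix (Fin K) {t : Fin K // m t = true} ℝ :=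
  Matrix.of fun i j => if i = (j : Fin K) then 1 else 0

/-- `V_m(Σ) = D_m (D_mᵀ Σ D_m)⁻¹ D_mᵀ`.  When `m = 0` the column index type is empty,
so this is the zero matrix, matching the convention `V_0(Σ) = 0`. -/
noncomputable def Vm (K : ℕ) (S : Matrix (Fin K) (Fin K) ℝ) (m : Fin K → Bool) :
    Matrix (Fin K) (Fin K) ℝ :=
  selMat K m * ((selMat K m)ᵀ * S * selMat K m)⁻¹ * (selMat K m)ᵀ

/-- `E[V_M(Σ)] = ∑ m P(M = m) V_m(Σ)`. -/
noncomputable def EVm (K : ℕ) (S : Matrix (Fin K) (Fin K) ℝ)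
    (p : (Fin K → Bool) → ℝ) : Matrix (Fin K) (Fin K) ℝ :=
  ∑ m : Fin K → Bool, p m • Vm K S m

/-! Write `A = E[V_M(Σ)]` and `u = A⁻¹ e_K`, so that `uᵀ A u = u_K = (A⁻¹)_{KK}`.
For every `m` with `m_K = 1`, Cauchy–Schwarz for the inner product given by the submatrix
`Σ_m = D_mᵀ Σ D_m` gives `uᵀ V_m u = u_mᵀ Σ_m⁻¹ u_m ≥ u_K² / Σ_{KK}`, and all other terms are
nonnegative. Averaging, `u_K ≥ P(M_K = 1) u_K² / Σ_{KK}`, hence `u_K ≤ Σ_{KK} / P(M_K = 1)`. -/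

namespace Matrix

variable {n : Type*} [Fintype n]

theorem PosSemidef.sq_dotProduct_mulVec_le {C : Matrix n n ℝ} (hC : C.PosSemidef)
    (x y : n → ℝ) :
    (x ⬝ᵥ C *ᵥ y) ^ 2 ≤ (x ⬝ᵥ C *ᵥ x) * (y ⬝ᵥ C *ᵥ y) := by
  have hsymm : y ⬝ᵥ C *ᵥ x = x ⬝ᵥ C *ᵥ y := by
    rw [dotProduct_mulVec, ← mulVec_transpose, dotProduct_comm,
      ← conjTranspose_eq_transpose_of_trivial, hC.isHermitian.eq]
  have hdisc := discrim_le_zero (a := x ⬝ᵥ C *ᵥ x) (b := 2 * (x ⬝ᵥ C *ᵥ y))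
    (c := y ⬝ᵥ C *ᵥ y) fun t => by
      have hnonneg := hC.dotProduct_mulVec_nonneg (t • x + y)
      simp only [star_trivial, mulVec_add, mulVec_smul, dotProduct_add, add_dotProduct,
        dotProduct_smul, smul_dotProduct, smul_eq_mul, hsymm] at hnonneg
      linarith
  rw [discrim] at hdisc
  linarith

variable [DecidableEq n]

theorem PosDef.sq_apply_le_diag_mul_dotProduct_inv_mulVec {B : Matrix n n ℝ}
    (hB : B.PosDef) (k : n) (y : n → ℝ) : y k ^ 2 ≤ B k k * (y ⬝ᵥ B⁻¹ *ᵥ y) := by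
  have hy : B *ᵥ (B⁻¹ *ᵥ y) = y := by
    rw [mulVec_mulVec, mul_nonsing_inv _ ((isUnit_iff_isUnit_det B).mp hB.isUnit), one_mulVec]
  have hcs := hB.posSemidef.sq_dotProduct_mulVec_le (Pi.single k 1) (B⁻¹ *ᵥ y)
  rwa [hy, single_one_dotProduct, mulVec_single_one, single_one_dotProduct, col_apply,
    dotProduct_comm] at hcs

theorem inv_apply_le_inv_of_mul_sq_le {A : Matrix n n ℝ} (hA : IsUnit A.det) {c : ℝ}
    (hc : 0 < c) (k : n) (h : ∀ x, c * x k ^ 2 ≤ x ⬝ᵥ A *ᵥ x) : A⁻¹ k k ≤ c⁻¹ := by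
  set u := A⁻¹ *ᵥ Pi.single k 1
  have hu : u k = A⁻¹ k k := by simp [u, mulVec_single]
  have hquad : u ⬝ᵥ A *ᵥ u = u k := by
    rw [mulVec_mulVec, mul_nonsing_inv _ hA, one_mulVec, dotProduct_single, mul_one]
  have hbound := h u
  rw [hquad] at hbound
  rw [← hu]
  rcases le_or_gt (u k) 0 with hneg | hpos
  · exact hneg.trans (inv_pos.mpr hc).le
  · rw [← mul_le_mul_iff_of_pos_left hc, mul_inv_cancel₀ hc.ne']
    nlinarith

end Matrix

section SelectionMatrix

variable {K : ℕ}

theorem vecMul_selMat (m : Fin K → Bool) (x : Fin K → ℝ) :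
    x ᵥ* selMat K m = fun j : {t // m t = true} => x j := by
  ext j
  simp [selMat, vecMul, dotProduct]

theorem selMat_transpose_mul_mul (S : Matrix (Fin K) (Fin K) ℝ) (m : Fin K → Bool) :
    (selMat K m)ᵀ * S * selMat K m = S.submatrix Subtype.val Subtype.val := by
  ext i j
  simp [selMat, Matrix.mul_apply]

theorem dotProduct_Vm_mulVec (S : Matrix (Fin K) (Fin K) ℝ) (m : Fin K → Bool)
    (x : Fin K → ℝ) :
    x ⬝ᵥ Vm K S m *ᵥ x = (fun j : {t // m t = true} => x j) ⬝ᵥ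
      (S.submatrix Subtype.val Subtype.val)⁻¹ *ᵥ (fun j : {t // m t = true} => x j) := by
  rw [Vm, selMat_transpose_mul_mul, ← mulVec_mulVec, ← mulVec_mulVec, dotProduct_mulVec,
    vecMul_selMat, mulVec_transpose, vecMul_selMat]

variable {S : Matrix (Fin K) (Fin K) ℝ}

theorem posSemidef_Vm (hS : S.PosDef) (m : Fin K → Bool) : (Vm K S m).PosSemidef := by
  rw [Vm, selMat_transpose_mul_mul, ← conjTranspose_eq_transpose_of_trivial]
  exact (hS.submatrix Subtype.val_injective).inv.posSemidef.mul_mul_conjTranspose_same _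

theorem posDef_Vm_true (hS : S.PosDef) : (Vm K S fun _ => true).PosDef := by
  rw [Vm, selMat_transpose_mul_mul, ← conjTranspose_eq_transpose_of_trivial]
  refine (hS.submatrix Subtype.val_injective).inv.mul_mul_conjTranspose_same fun x y hxy => ?_
  ext i
  simpa only [vecMul_selMat] using congrFun hxy ⟨i, rfl⟩

theorem sq_le_mul_dotProduct_Vm_mulVec (hS : S.PosDef) {m : Fin K → Bool} {k : Fin K}
    (hk : m k = true) (x : Fin K → ℝ) : x k ^ 2 ≤ S k k * (x ⬝ᵥ Vm K S m *ᵥ x) := by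
  rw [dotProduct_Vm_mulVec]
  exact (hS.submatrix Subtype.val_injective).sq_apply_le_diag_mul_dotProduct_inv_mulVec
    (⟨k, hk⟩ : {t // m t = true}) (fun j => x j)

end SelectionMatrix

section Expectation

variable {K : ℕ} {S : Matrix (Fin K) (Fin K) ℝ} {p : (Fin K → Bool) → ℝ}

theorem dotProduct_EVm_mulVec (x : Fin K → ℝ) :
    x ⬝ᵥ EVm K S p *ᵥ x = ∑ m, p m * (x ⬝ᵥ Vm K S m *ᵥ x) := by
  simp only [EVm, sum_mulVec, dotProduct_sum, smul_mulVec, dotProduct_smul, smul_eq_mul]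

theorem posDef_EVm (hS : S.PosDef) (hp0 : ∀ m, 0 ≤ p m) (hfull : 0 < p fun _ => true) :
    (EVm K S p).PosDef := by
  rw [EVm, ← Finset.add_sum_erase _ _ (Finset.mem_univ fun _ => true)]
  exact ((posDef_Vm_true hS).smul hfull).add_posSemidef
    (posSemidef_sum _ fun m _ => (posSemidef_Vm hS m).smul (hp0 m))

theorem mul_sq_le_mul_dotProduct_EVm_mulVec (hS : S.PosDef) (hp0 : ∀ m, 0 ≤ p m)
    (k : Fin K) (x : Fin K → ℝ) :
    (∑ m ∈ Finset.univ.filter (fun m => m k = true), p m) * x k ^ 2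
      ≤ S k k * (x ⬝ᵥ EVm K S p *ᵥ x) := by
  have hVm_nonneg : ∀ m, 0 ≤ x ⬝ᵥ Vm K S m *ᵥ x := fun m => by
    simpa using (posSemidef_Vm hS m).dotProduct_mulVec_nonneg x
  rw [dotProduct_EVm_mulVec, Finset.sum_mul, Finset.mul_sum]
  calc ∑ m ∈ Finset.univ.filter (fun m => m k = true), p m * x k ^ 2
      ≤ ∑ m ∈ Finset.univ.filter (fun m => m k = true),
          S k k * (p m * (x ⬝ᵥ Vm K S m *ᵥ x)) :=
        Finset.sum_le_sum fun m hm => by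
          rw [mul_left_comm]
          exact mul_le_mul_of_nonneg_left
            (sq_le_mul_dotProduct_Vm_mulVec hS (Finset.mem_filter.mp hm).2 x) (hp0 m)
    _ ≤ ∑ m, S k k * (p m * (x ⬝ᵥ Vm K S m *ᵥ x)) :=
        Finset.sum_le_sum_of_subset_of_nonneg (Finset.filter_subset _ _) fun m _ _ =>
          mul_nonneg hS.diag_pos.le (mul_nonneg (hp0 m) (hVm_nonneg m))

end Expectation

theorem stmt2_general (K : ℕ)
    (S : Matrix (Fin (K+1)) (Fin (K+1)) ℝ) (hS : S.PosDef)
    (p : (Fin (K+1) → Bool) → ℝ) (hp0 : ∀ m, 0 ≤ p m)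
    (hfull : 0 < p (fun _ => true)) :
    (EVm (K+1) S p)⁻¹ (Fin.last K) (Fin.last K)
      ≤ (∑ m ∈ Finset.univ.filter (fun m => m (Fin.last K) = true), p m)⁻¹
        * S (Fin.last K) (Fin.last K) := by
  set q := ∑ m ∈ Finset.univ.filter (fun m => m (Fin.last K) = true), p m
  have hq : 0 < q := Finset.sum_pos' (fun m _ => hp0 m)
    ⟨fun _ => true, Finset.mem_filter.mpr ⟨Finset.mem_univ _, rfl⟩, hfull⟩
  have hs : 0 < S (Fin.last K) (Fin.last K) := hS.diag_pos
  have hdet : IsUnit (EVm (K+1) S p).det :=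
    (isUnit_iff_isUnit_det _).mp (posDef_EVm hS hp0 hfull).isUnit
  calc (EVm (K+1) S p)⁻¹ (Fin.last K) (Fin.last K)
      ≤ (q / S (Fin.last K) (Fin.last K))⁻¹ :=
        inv_apply_le_inv_of_mul_sq_le hdet (div_pos hq hs) _ fun x => by
          rw [div_mul_eq_mul_div, div_le_iff₀' hs]
          exact mul_sq_le_mul_dotProduct_EVm_mulVec hS hp0 _ x
    _ = q⁻¹ * S (Fin.last K) (Fin.last K) := by rw [inv_div, div_eq_inv_mul]

/-- Lemma 1(2), inequality: for positive definite `Σ` and a random binary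
vector `M` with `P(M = 1_K) > 0`,
`e_Kᵀ E[V_M(Σ)]⁻¹ e_K ≤ P(M_K = 1)⁻¹ · e_Kᵀ Σ e_K`. -/
theorem stmt2 (K : ℕ)
    (S : Matrix (Fin (K+1)) (Fin (K+1)) ℝ) (hS : S.PosDef)
    (p : (Fin (K+1) → Bool) → ℝ) (hp0 : ∀ m, 0 ≤ p m) (hp1 : ∑ m, p m = 1)
    (hfull : 0 < p (fun _ => true)) :
    (EVm (K+1) S p)⁻¹ (Fin.last K) (Fin.last K)
      ≤ (∑ m ∈ Finset.univ.filter (fun m => m (Fin.last K) = true), p m)⁻¹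
        * S (Fin.last K) (Fin.last K) :=
  stmt2_general K S hS p hp0 hfull
end

section
/- Let Σ be K×K positive definite, B K×K positive semi-definite, and M a random binary vector with P(M = 1_K) > 0. Then e_K^T B e_K ≤ e_K^T E[V_M(Σ)]^{-1} E[V_M(Σ) B V_M(Σ)] E[V_M(Σ)]^{-1} e_K, with equality if and only if the random row vector e_K^T E[V_M(Σ)]^{-1} V_M(Σ) B^{1/2} is almost surely constant (over values m with P(M=m) > 0). -/
open Matrix BigOperators Finset

/-- The square root of a positive semidefinite matrix, `Matrix.PosSemidef.sqrt` of the older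
Mathlib (since removed), with its old definition. -/
noncomputable def posSemidefSqrt {n : Type*} [Fintype n] [DecidableEq n] {A : Matrix n n ℝ}
    (hA : A.PosSemidef) : Matrix n n ℝ :=
  hA.1.eigenvectorUnitary.1 * diagonal ((↑) ∘ (Real.sqrt ∘ hA.1.eigenvalues)) *
    (star hA.1.eigenvectorUnitary : Matrix n n ℝ)

section Jensen

variable {ι n R : Type*} [Fintype ι] [Fintype n] [CommRing R] (p : ι → R) (w : ι → n → R)

lemma sum_mul_dotProduct_sub_self (hp1 : ∑ i, p i = 1) (c : n → R) :
    ∑ i, p i * ((w i - c) ⬝ᵥ (w i - c)) =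
      ∑ i, p i * (w i ⬝ᵥ w i) - 2 * (c ⬝ᵥ ∑ i, p i • w i) + c ⬝ᵥ c := by
  calc ∑ i, p i * ((w i - c) ⬝ᵥ (w i - c))
      = ∑ i, (p i * (w i ⬝ᵥ w i) - 2 * (p i * (c ⬝ᵥ w i)) + p i * (c ⬝ᵥ c)) := by
        refine sum_congr rfl fun i _ => ?_
        simp only [sub_dotProduct, dotProduct_sub, dotProduct_comm (w i) c]
        ring
    _ = _ := by
        simp only [sum_add_distrib, sum_sub_distrib, ← mul_sum, ← sum_mul, hp1, dotProduct_sum,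
          dotProduct_smul, smul_eq_mul, one_mul]

lemma sum_mul_sum_mul_dotProduct_sub_self (hp1 : ∑ i, p i = 1) :
    ∑ i, p i * ∑ j, p j * ((w j - w i) ⬝ᵥ (w j - w i)) =
      2 * (∑ i, p i * (w i ⬝ᵥ w i) - (∑ i, p i • w i) ⬝ᵥ ∑ i, p i • w i) := by
  have hmean :
      ∑ i, p i * (w i ⬝ᵥ ∑ j, p j • w j) = (∑ j, p j • w j) ⬝ᵥ ∑ j, p j • w j := by
    simp only [sum_dotProduct, smul_dotProduct, smul_eq_mul]
  simp only [sum_mul_dotProduct_sub_self p w hp1, mul_add, mul_sub, sum_add_distrib,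
    sum_sub_distrib, ← sum_mul, hp1, one_mul, mul_left_comm _ (2 : R), ← mul_sum, hmean]
  ring

variable [LinearOrder R] [IsStrictOrderedRing R]

theorem dotProduct_sum_smul_self_le (hp0 : ∀ i, 0 ≤ p i) (hp1 : ∑ i, p i = 1) :
    (∑ i, p i • w i) ⬝ᵥ (∑ i, p i • w i) ≤ ∑ i, p i * (w i ⬝ᵥ w i) := by
  have hvar := sum_mul_dotProduct_sub_self p w hp1 (∑ i, p i • w i)
  have hnonneg : 0 ≤ ∑ i, p i * ((w i - ∑ i, p i • w i) ⬝ᵥ (w i - ∑ i, p i • w i)) :=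
    sum_nonneg fun i _ => mul_nonneg (hp0 i) (sum_nonneg fun _ _ => mul_self_nonneg _)
  linarith

theorem dotProduct_sum_smul_self_eq_iff (hp0 : ∀ i, 0 ≤ p i) (hp1 : ∑ i, p i = 1) :
    (∑ i, p i • w i) ⬝ᵥ (∑ i, p i • w i) = ∑ i, p i * (w i ⬝ᵥ w i) ↔
      ∀ i j, 0 < p i → 0 < p j → w i = w j := by
  rw [eq_comm, ← sub_eq_zero, ← mul_right_inj' (two_ne_zero (α := R)), mul_zero,
    ← sum_mul_sum_mul_dotProduct_sub_self p w hp1]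
  have hd : ∀ i j, 0 ≤ p j * ((w j - w i) ⬝ᵥ (w j - w i)) := fun i j =>
    mul_nonneg (hp0 j) (sum_nonneg fun _ _ => mul_self_nonneg _)
  have hrow : ∀ i,
      ∑ j, p j * ((w j - w i) ⬝ᵥ (w j - w i)) = 0 ↔ ∀ j, p j = 0 ∨ w j = w i := by
    intro i
    simp only [Fintype.sum_eq_zero_iff_of_nonneg (hd i), funext_iff, Pi.zero_apply, mul_eq_zero,
      dotProduct_self_eq_zero, sub_eq_zero]
  rw [Fintype.sum_eq_zero_iff_of_nonneg fun i => mul_nonneg (hp0 i) (sum_nonneg fun j _ => hd i j)]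
  simp only [funext_iff, Pi.zero_apply, mul_eq_zero, hrow]
  constructor
  · intro h i j hi hj
    exact ((h j).resolve_left hj.ne' i).resolve_left hi.ne'
  · intro h i
    refine (hp0 i).eq_or_lt.imp Eq.symm fun hi j => (hp0 j).eq_or_lt.imp Eq.symm fun hj => ?_
    exact h j i hj hi

end Jensen

section SquareRoot

variable {n : Type*} [Fintype n] [DecidableEq n] {A : Matrix n n ℝ}

lemma posSemidefSqrt_mul_self (hA : A.PosSemidef) : posSemidefSqrt hA * posSemidefSqrt hA = A := by
  set U := hA.1.eigenvectorUnitary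
  set D : Matrix n n ℝ := diagonal ((↑) ∘ (Real.sqrt ∘ hA.1.eigenvalues))
  have hU : (star U : Matrix n n ℝ) * U.1 = 1 := Unitary.star_mul_self_of_mem U.2
  have hD : D * D = diagonal (RCLike.ofReal ∘ hA.1.eigenvalues) := by
    rw [diagonal_mul_diagonal]
    congr 1
    funext i
    simp [Real.mul_self_sqrt (hA.eigenvalues_nonneg i)]
  conv_rhs => rw [hA.1.spectral_theorem, Unitary.conjStarAlgAut_apply]
  calc posSemidefSqrt hA * posSemidefSqrt hA = U.1 * D * ((star U : Matrix n n ℝ) * U.1) * D *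
      (star U : Matrix n n ℝ) := by simp only [posSemidefSqrt, Matrix.mul_assoc]; rfl
    _ = _ := by rw [hU, Matrix.mul_one, Matrix.mul_assoc _ D D, hD]

lemma posSemidefSqrt_isSymm (hA : A.PosSemidef) : (posSemidefSqrt hA).IsSymm := by
  rw [← isHermitian_iff_isSymm, Matrix.IsHermitian, posSemidefSqrt, conjTranspose_mul,
    conjTranspose_mul, diagonal_conjTranspose]
  simp only [Matrix.mul_assoc, star_eq_conjTranspose, conjTranspose_conjTranspose, star_trivial]

lemma posSemidefSqrt_mul_transpose (hA : A.PosSemidef) :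
    posSemidefSqrt hA * (posSemidefSqrt hA)ᵀ = A := by
  rw [(posSemidefSqrt_isSymm hA).eq, posSemidefSqrt_mul_self]

end SquareRoot

section Selection

variable {K : ℕ} (m : Fin K → Bool)

lemma transpose_selMat_mul_selMat : (selMat K m)ᵀ * selMat K m = 1 := by
  ext j j'
  simp [Matrix.mul_apply, selMat, Matrix.one_apply, Subtype.ext_iff, eq_comm]

lemma selMat_mul_transpose_selMat_true :
    selMat K (fun _ => true) * (selMat K fun _ => true)ᵀ = 1 := by
  ext i i'
  rw [Matrix.mul_apply, Fintype.sum_eq_single ⟨i, rfl⟩ fun j hj => by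
    rw [selMat, of_apply, if_neg fun h => hj (Subtype.ext h.symm), zero_mul]]
  simp [selMat, Matrix.one_apply, eq_comm]

lemma selMat_mulVec_injective : Function.Injective (selMat K m).mulVec := fun x y h => by
  simpa [mulVec_mulVec, transpose_selMat_mul_selMat] using congrArg ((selMat K m)ᵀ *ᵥ ·) h

variable {S : Matrix (Fin K) (Fin K) ℝ}

lemma posDef_transpose_selMat_mul_mul_selMat (hS : S.PosDef) :
    ((selMat K m)ᵀ * S * selMat K m).PosDef := by
  simpa using hS.conjTranspose_mul_mul_same (selMat_mulVec_injective m)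

lemma Vm_posSemidef (hS : S.PosDef) : (Vm K S m).PosSemidef := by
  have h := (posDef_transpose_selMat_mul_mul_selMat m hS).inv.posSemidef.mul_mul_conjTranspose_same
    (selMat K m)
  rwa [conjTranspose_eq_transpose_of_trivial] at h

lemma Vm_true (hS : S.PosDef) : Vm K S (fun _ => true) = S⁻¹ := by
  set D := selMat K fun _ => true
  have hN := (posDef_transpose_selMat_mul_mul_selMat (fun _ => true) hS).isUnit
  refine (inv_eq_left_inv ?_).symm
  calc Vm K S (fun _ => true) * S = D * (Dᵀ * S * D)⁻¹ * Dᵀ * S * (D * Dᵀ) := by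
        rw [selMat_mul_transpose_selMat_true, Matrix.mul_one]; rfl
    _ = D * ((Dᵀ * S * D)⁻¹ * (Dᵀ * S * D)) * Dᵀ := by simp only [Matrix.mul_assoc]
    _ = 1 := by rw [nonsing_inv_mul _ ((isUnit_iff_isUnit_det _).mp hN), Matrix.mul_one,
          selMat_mul_transpose_selMat_true]

lemma EVm_posDef (hS : S.PosDef) (p : (Fin K → Bool) → ℝ) (hp0 : ∀ m, 0 ≤ p m)
    (hfull : 0 < p fun _ => true) : (EVm K S p).PosDef := by
  rw [EVm, ← add_sum_erase _ _ (mem_univ fun _ => true), Vm_true hS]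
  exact (hS.inv.smul hfull).add_posSemidef
    (posSemidef_sum _ fun m _ => (Vm_posSemidef m hS).smul (hp0 m))

end Selection

section Sandwich

variable {ι n R : Type*} [Fintype ι] [Fintype n] [CommRing R]
  (p : ι → R) (A Q : Matrix n n R) (V : ι → Matrix n n R)

lemma mul_transpose_apply_self (i : n) : (Q * Qᵀ) i i = Q i ⬝ᵥ Q i := rfl

lemma sandwich_apply_eq_sum_dotProduct {B : Matrix n n R} (hQ : Q * Qᵀ = B) (hA : A.IsSymm)
    (hV : ∀ i, (V i).IsSymm) (e : n) :
    (A * (∑ i, p i • (V i * B * V i)) * A) e e =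
      ∑ i, p i * ((A * V i * Q) e ⬝ᵥ (A * V i * Q) e) := by
  have hsq : ∀ i, A * (V i * B * V i) * A = (A * V i * Q) * (A * V i * Q)ᵀ := fun i => by
    simp only [← hQ, transpose_mul, hA.eq, (hV i).eq, Matrix.mul_assoc]
  simp only [mul_sum, sum_mul, Matrix.mul_smul, Matrix.smul_mul, hsq, Matrix.sum_apply,
    Matrix.smul_apply, smul_eq_mul, mul_transpose_apply_self]

lemma sum_smul_row_eq [DecidableEq n] (hAV : A * ∑ i, p i • V i = 1) (e : n) :
    ∑ i, p i • (A * V i * Q) e = Q e := by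
  have h : ∑ i, p i • (A * V i * Q) = Q := by
    calc ∑ i, p i • (A * V i * Q) = A * (∑ i, p i • V i) * Q := by
          simp only [mul_sum, sum_mul, Matrix.mul_smul, Matrix.smul_mul]
      _ = Q := by rw [hAV, Matrix.one_mul]
  ext j
  simpa [Matrix.sum_apply, Finset.sum_apply] using congrFun₂ h e j

end Sandwich

/-- Lemma 1(4): for positive definite `Σ`, positive semi-definite `B` and
a random binary vector `M` with `P(M = 1_K) > 0`,
`e_Kᵀ B e_K ≤ e_Kᵀ E[V_M(Σ)]⁻¹ E[V_M(Σ) B V_M(Σ)] E[V_M(Σ)]⁻¹ e_K`,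
with equality iff the row vector `e_Kᵀ E[V_M(Σ)]⁻¹ V_m(Σ) B^{1/2}` is constant over the
values `m` with `P(M = m) > 0`. -/
theorem stmt6 (K : ℕ)
    (S B : Matrix (Fin (K+1)) (Fin (K+1)) ℝ) (hS : S.PosDef) (hB : B.PosSemidef)
    (p : (Fin (K+1) → Bool) → ℝ) (hp0 : ∀ m, 0 ≤ p m) (hp1 : ∑ m, p m = 1)
    (hfull : 0 < p (fun _ => true)) :
    B (Fin.last K) (Fin.last K)
      ≤ ((EVm (K+1) S p)⁻¹
          * (∑ m : Fin (K+1) → Bool, p m • (Vm (K+1) S m * B * Vm (K+1) S m))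
          * (EVm (K+1) S p)⁻¹) (Fin.last K) (Fin.last K) ∧
    (B (Fin.last K) (Fin.last K)
        = ((EVm (K+1) S p)⁻¹
            * (∑ m : Fin (K+1) → Bool, p m • (Vm (K+1) S m * B * Vm (K+1) S m))
            * (EVm (K+1) S p)⁻¹) (Fin.last K) (Fin.last K)
      ↔ ∀ m m' : Fin (K+1) → Bool, 0 < p m → 0 < p m' →
          ((EVm (K+1) S p)⁻¹ * Vm (K+1) S m * posSemidefSqrt hB) (Fin.last K)
            = ((EVm (K+1) S p)⁻¹ * Vm (K+1) S m' * posSemidefSqrt hB) (Fin.last K)) := by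
  have hEV := EVm_posDef hS p hp0 hfull
  have hinv : (EVm (K+1) S p)⁻¹ * ∑ m, p m • Vm (K+1) S m = 1 :=
    nonsing_inv_mul _ ((isUnit_iff_isUnit_det _).mp hEV.isUnit)
  have hsymm : (EVm (K+1) S p)⁻¹.IsSymm := by simpa using hEV.inv.isHermitian
  have hVsymm : ∀ m, (Vm (K+1) S m).IsSymm := fun m => by
    simpa using (Vm_posSemidef m hS).isHermitian
  have hQ := posSemidefSqrt_mul_transpose hB
  rw [← congrFun₂ hQ, mul_transpose_apply_self,
    sandwich_apply_eq_sum_dotProduct p _ _ _ hQ hsymm hVsymm,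
    ← sum_smul_row_eq p _ (posSemidefSqrt hB) _ hinv]
  exact ⟨dotProduct_sum_smul_self_le _ _ hp0 hp1, dotProduct_sum_smul_self_eq_iff _ _ hp0 hp1⟩
end

section
/- Let Σ be K×K positive definite (K ≥ 2) partitioned with upper-left block Σ_{-K,-K} of size (K−1)×(K−1), off-diagonal column Σ_{-K,K}, and scalar σ = e_K^T Σ e_K. For a binary vector m with m_K = 1 and at least one other entry equal to 1, writing D_m in block form with last row (0,...,0,1), the matrix V_m(Σ) = D_m(D_m^T Σ D_m)^{-1} D_m^T has block form [[A_m, −σ^{-1} A_m Σ_{-K,K}], [−σ^{-1} Σ_{-K,K}^T A_m, σ^{-1} + σ^{-2} Σ_{-K,K}^T A_m Σ_{-K,K}]], where A_m = D̃_m (D̃_m^T (Σ_{-K,-K} − Σ_{-K,K} Σ_{-K,K}^T/σ) D̃_m)^{-1} D̃_m^T and D̃_m is the selection matrix for the ones of m among the first K−1 coordinates. -/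
/-!
Split off the last coordinate. Then `D_m` becomes block diagonal `diag(D̃_m, 1)`, and
`D_mᵀ Σ D_m` becomes a block matrix whose lower-right corner is the scalar `σ`. The usual
block inverse, computed through the Schur complement of `σ`, gives the four blocks. This works
because the Schur complement of `σ` in the compressed matrix is the compression by `D̃_m` of
the Schur complement `Σ_{-K,-K} − c cᵀ/σ` of `σ` in `Σ`. Positive definiteness of `Σ` makes
both `σ` and `D_mᵀ Σ D_m` invertible.
-/

open Matrix BigOperators Finset

namespace Matrix

variable {ι ι' κ κ' n α : Type*} [Fintype ι] [Field α]

theorem transpose_mul_mul_submatrix_equiv [Fintype ι'] [Fintype κ'] (P : Matrix ι κ α)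
    (X : Matrix ι ι α) (e₁ : ι' ≃ ι) (e₂ : κ' ≃ κ) :
    (P.submatrix e₁ e₂)ᵀ * X.submatrix e₁ e₁ * P.submatrix e₁ e₂ =
      (Pᵀ * X * P).submatrix e₂ e₂ := by
  simp only [transpose_submatrix, submatrix_mul_equiv]

variable [Fintype κ] [DecidableEq κ]

noncomputable def sandwichInv (P : Matrix ι κ α) (X : Matrix ι ι α) : Matrix ι ι α :=
  P * (Pᵀ * X * P)⁻¹ * Pᵀ

theorem sandwichInv_submatrix_equiv [Fintype ι'] [Fintype κ'] [DecidableEq κ']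
    (P : Matrix ι κ α) (X : Matrix ι ι α) (e₁ : ι' ≃ ι) (e₂ : κ' ≃ κ) :
    (sandwichInv P X).submatrix e₁ e₁ = sandwichInv (P.submatrix e₁ e₂) (X.submatrix e₁ e₁) := by
  rw [sandwichInv, sandwichInv, transpose_mul_mul_submatrix_equiv, inv_submatrix_equiv,
    transpose_submatrix, submatrix_mul_equiv _ _ _ e₂, submatrix_mul_equiv _ _ _ e₂]

theorem sandwichInv_fromBlocks [Fintype n] [DecidableEq n] (P : Matrix ι κ α)
    (A : Matrix ι ι α) (B : Matrix ι n α) (D : Matrix n n α) (hD : IsUnit D.det)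
    (h : IsUnit (det ((fromBlocks P 0 0 (1 : Matrix n n α))ᵀ * fromBlocks A B Bᵀ D *
      fromBlocks P 0 0 (1 : Matrix n n α)))) :
    let V := sandwichInv P (A - B * D⁻¹ * Bᵀ)
    sandwichInv (fromBlocks P 0 0 (1 : Matrix n n α)) (fromBlocks A B Bᵀ D) =
      fromBlocks V (-(V * B * D⁻¹)) (-(D⁻¹ * Bᵀ * V)) (D⁻¹ + D⁻¹ * Bᵀ * V * B * D⁻¹) := by
  intro V
  have hcompress : (fromBlocks P 0 0 (1 : Matrix n n α))ᵀ * fromBlocks A B Bᵀ D *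
      fromBlocks P 0 0 (1 : Matrix n n α) = fromBlocks (Pᵀ * A * P) (Pᵀ * B) (Bᵀ * P) D := by
    simp [fromBlocks_transpose, fromBlocks_multiply, Matrix.mul_assoc]
  have hschur : Pᵀ * A * P - Pᵀ * B * D⁻¹ * (Bᵀ * P) = Pᵀ * (A - B * D⁻¹ * Bᵀ) * P := by
    simp only [Matrix.mul_sub, Matrix.sub_mul, Matrix.mul_assoc]
  rw [hcompress] at h
  let := D.invertibleOfIsUnitDet hD
  let := invertibleOfIsUnitDet _ h
  let := invertibleOfFromBlocks₂₂Invertible (Pᵀ * A * P) (Pᵀ * B) (Bᵀ * P) D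
  rw [sandwichInv, hcompress, ← invOf_eq_nonsing_inv, invOf_fromBlocks₂₂_eq]
  simp only [invOf_eq_nonsing_inv, hschur, fromBlocks_transpose, fromBlocks_multiply, V,
    sandwichInv]
  simp [Matrix.mul_assoc]

theorem sandwichInv_fromBlocks_replicateCol (P : Matrix ι κ α) (A : Matrix ι ι α) (b : ι → α)
    {σ : α} (hσ : σ ≠ 0)
    (h : IsUnit (det ((fromBlocks P 0 0 (1 : Matrix Unit Unit α))ᵀ *
      fromBlocks A (replicateCol Unit b) (replicateRow Unit b) (σ • 1) *
      fromBlocks P 0 0 (1 : Matrix Unit Unit α)))) :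
    let V := sandwichInv P (A - σ⁻¹ • vecMulVec b b)
    sandwichInv (fromBlocks P 0 0 (1 : Matrix Unit Unit α))
        (fromBlocks A (replicateCol Unit b) (replicateRow Unit b) (σ • 1)) =
      fromBlocks V (replicateCol Unit (-σ⁻¹ • V *ᵥ b)) (replicateRow Unit (-σ⁻¹ • b ᵥ* V))
        ((σ⁻¹ + σ⁻¹ ^ 2 * (b ⬝ᵥ V *ᵥ b)) • 1) := by
  intro V
  have hD : IsUnit (σ • 1 : Matrix Unit Unit α).det := by simp [hσ]
  have hDinv : (σ • 1 : Matrix Unit Unit α)⁻¹ = σ⁻¹ • 1 :=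
    inv_eq_left_inv (by rw [smul_mul_smul, Matrix.one_mul, inv_mul_cancel₀ hσ, one_smul])
  have hschur : replicateCol Unit b * (σ⁻¹ • 1 : Matrix Unit Unit α) * (replicateCol Unit b)ᵀ =
      σ⁻¹ • vecMulVec b b := by
    rw [transpose_replicateCol, Matrix.mul_smul, Matrix.mul_one, smul_mul, vecMulVec_eq Unit]
  rw [← transpose_replicateCol] at h ⊢
  rw [sandwichInv_fromBlocks P A _ _ hD h, hDinv, hschur]
  congr 1
  · ext i j; simp [V, mul_apply, mulVec, dotProduct, mul_comm]
  · ext i j; simp [V, mul_apply, vecMul, dotProduct]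
  · ext i j
    simp only [V, transpose_replicateCol, smul_mul, Matrix.one_mul, Algebra.mul_smul_comm,
      mul_one, add_apply, smul_apply, one_apply_eq, smul_eq_mul, mul_apply, replicateRow_apply,
      replicateCol_apply, sum_mul, mul_sum, inv_pow, dotProduct, mulVec, add_right_inj]
    rw [Finset.sum_comm]
    refine Finset.sum_congr rfl fun _ _ => Finset.sum_congr rfl fun _ _ => by ring

end Matrix

theorem Vm_eq_sandwichInv (K : ℕ) (S : Matrix (Fin K) (Fin K) ℝ) (m : Fin K → Bool) :
    Vm K S m = sandwichInv (selMat K m) S := rfl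

theorem selMat_transpose_mul_mul_selMat (K : ℕ) (S : Matrix (Fin K) (Fin K) ℝ)
    (m : Fin K → Bool) :
    (selMat K m)ᵀ * S * selMat K m = S.submatrix Subtype.val Subtype.val := by
  ext a b
  simp [mul_apply, selMat, ite_mul, mul_ite]

theorem isUnit_det_transpose_mul_mul_selMat {K : ℕ} {S : Matrix (Fin K) (Fin K) ℝ}
    (hS : S.PosDef) (m : Fin K → Bool) : IsUnit ((selMat K m)ᵀ * S * selMat K m).det := by
  rw [selMat_transpose_mul_mul_selMat, ← isUnit_iff_isUnit_det]
  exact (hS.submatrix Subtype.val_injective).isUnit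

def finSumUnitEquiv (K : ℕ) : Fin K ⊕ Unit ≃ Fin (K + 1) :=
  (finSuccEquivLast.trans (Equiv.optionEquivSumPUnit (Fin K))).symm

@[simp] theorem finSumUnitEquiv_inl (K : ℕ) (i : Fin K) :
    finSumUnitEquiv K (.inl i) = i.castSucc := by
  simp [finSumUnitEquiv]

@[simp] theorem finSumUnitEquiv_inr (K : ℕ) (u : Unit) :
    finSumUnitEquiv K (.inr u) = Fin.last K := by
  simp [finSumUnitEquiv]

def selMatColEquiv {K : ℕ} (m : Fin (K + 1) → Bool) (hmK : m (Fin.last K) = true) :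
    {t : Fin K // m t.castSucc = true} ⊕ Unit ≃ {t : Fin (K + 1) // m t = true} where
  toFun := Sum.elim (fun a => ⟨a.1.castSucc, a.2⟩) fun _ => ⟨Fin.last K, hmK⟩
  invFun t := if h : t.1 = Fin.last K then .inr () else .inl ⟨t.1.castPred h, by simpa using t.2⟩
  left_inv := by
    rintro (a | ⟨⟩)
    · simp [(Fin.castSucc_lt_last a.1).ne]
    · simp
  right_inv t := by
    by_cases h : t.1 = Fin.last K
    · simp only [h, ↓reduceDIte, Sum.elim_inr]
      exact Subtype.ext h.symm
    · simp [h]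

theorem selMat_submatrix_finSumUnitEquiv {K : ℕ} (m : Fin (K + 1) → Bool)
    (hmK : m (Fin.last K) = true) :
    (selMat (K + 1) m).submatrix (finSumUnitEquiv K) (selMatColEquiv m hmK) =
      fromBlocks (selMat K fun t => m t.castSucc) 0 0 1 := by
  ext (i | i) (j | j) <;>
    simp [selMat, selMatColEquiv, Fin.castSucc_ne_last, (Fin.castSucc_ne_last _).symm]

theorem submatrix_finSumUnitEquiv {K : ℕ} {S : Matrix (Fin (K + 1)) (Fin (K + 1)) ℝ}
    (hS : S.IsSymm) :
    S.submatrix (finSumUnitEquiv K) (finSumUnitEquiv K) =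
      fromBlocks (S.submatrix Fin.castSucc Fin.castSucc)
        (replicateCol Unit fun i => S i.castSucc (Fin.last K))
        (replicateRow Unit fun i => S i.castSucc (Fin.last K))
        (S (Fin.last K) (Fin.last K) • 1) := by
  ext (i | i) (j | j) <;> simp [hS.apply]

theorem stmt11_general (K : ℕ)
    (S : Matrix (Fin (K+1)) (Fin (K+1)) ℝ) (hS : S.PosDef)
    (m : Fin (K+1) → Bool) (hmK : m (Fin.last K) = true) :
    let σ : ℝ := S (Fin.last K) (Fin.last K)
    let c : Fin K → ℝ := fun i => S i.castSucc (Fin.last K)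
    let Ssub : Matrix (Fin K) (Fin K) ℝ := S.submatrix Fin.castSucc Fin.castSucc
    let m' : Fin K → Bool := fun t => m t.castSucc
    let Am : Matrix (Fin K) (Fin K) ℝ :=
      Vm K (Ssub - σ⁻¹ • Matrix.vecMulVec c c) m'
    (∀ i j : Fin K, Vm (K+1) S m i.castSucc j.castSucc = Am i j) ∧
    (∀ i : Fin K, Vm (K+1) S m i.castSucc (Fin.last K) = -σ⁻¹ * (Am *ᵥ c) i) ∧
    (∀ j : Fin K, Vm (K+1) S m (Fin.last K) j.castSucc = -σ⁻¹ * (c ᵥ* Am) j) ∧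
    Vm (K+1) S m (Fin.last K) (Fin.last K) = σ⁻¹ + σ⁻¹ ^ 2 * (c ⬝ᵥ Am *ᵥ c) := by
  intro σ c Ssub m' Am
  set e := finSumUnitEquiv K
  have hM := submatrix_finSumUnitEquiv (isHermitian_iff_isSymm.mp hS.isHermitian)
  have hunit := isUnit_det_transpose_mul_mul_selMat hS m
  rw [← det_submatrix_equiv_self (selMatColEquiv m hmK), ← transpose_mul_mul_submatrix_equiv _ _ e,
    hM, selMat_submatrix_finSumUnitEquiv] at hunit
  have hV : (Vm (K + 1) S m).submatrix e e =
      fromBlocks Am (replicateCol Unit (-σ⁻¹ • Am *ᵥ c)) (replicateRow Unit (-σ⁻¹ • c ᵥ* Am))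
        ((σ⁻¹ + σ⁻¹ ^ 2 * (c ⬝ᵥ Am *ᵥ c)) • 1) := by
    rw [Vm_eq_sandwichInv, sandwichInv_submatrix_equiv _ _ e (selMatColEquiv m hmK),
      selMat_submatrix_finSumUnitEquiv, hM]
    exact sandwichInv_fromBlocks_replicateCol _ _ _ hS.diag_pos.ne' hunit
  refine ⟨fun i j => ?_, fun i => ?_, fun j => ?_, ?_⟩
  · simpa [e] using congrFun (congrFun hV (.inl i)) (.inl j)
  · simpa [e] using congrFun (congrFun hV (.inl i)) (.inr ())
  · simpa [e] using congrFun (congrFun hV (.inr ())) (.inl j)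
  · simpa [e] using congrFun (congrFun hV (.inr ())) (.inr ())

/-- block form of `V_m(Σ)` for a pattern `m` with `m_K = 1` and at least
one other entry equal to `1`.  With `σ = Σ_{K,K}`, `c = Σ_{-K,K}`,
`A_m = D̃_m (D̃_mᵀ (Σ_{-K,-K} − c cᵀ/σ) D̃_m)⁻¹ D̃_mᵀ` (built here from the restricted
pattern `m'` via `Vm` applied to the Schur complement), the blocks of `V_m(Σ)` are
`A_m`, `−σ⁻¹ A_m c`, `−σ⁻¹ cᵀ A_m`, and `σ⁻¹ + σ⁻² cᵀ A_m c`. -/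
theorem stmt11 (K : ℕ)
    (S : Matrix (Fin (K+1)) (Fin (K+1)) ℝ) (hS : S.PosDef)
    (m : Fin (K+1) → Bool) (hmK : m (Fin.last K) = true)
    (hm : ∃ t : Fin K, m t.castSucc = true) :
    let σ : ℝ := S (Fin.last K) (Fin.last K)
    let c : Fin K → ℝ := fun i => S i.castSucc (Fin.last K)
    let Ssub : Matrix (Fin K) (Fin K) ℝ := S.submatrix Fin.castSucc Fin.castSucc
    let m' : Fin K → Bool := fun t => m t.castSucc
    let Am : Matrix (Fin K) (Fin K) ℝ :=
      Vm K (Ssub - σ⁻¹ • Matrix.vecMulVec c c) m'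
    (∀ i j : Fin K, Vm (K+1) S m i.castSucc j.castSucc = Am i j) ∧
    (∀ i : Fin K, Vm (K+1) S m i.castSucc (Fin.last K) = -σ⁻¹ * (Am *ᵥ c) i) ∧
    (∀ j : Fin K, Vm (K+1) S m (Fin.last K) j.castSucc = -σ⁻¹ * (c ᵥ* Am) j) ∧
    Vm (K+1) S m (Fin.last K) (Fin.last K) = σ⁻¹ + σ⁻¹ ^ 2 * (c ⬝ᵥ Am *ᵥ c) :=
  stmt11_general K S hS m hmK
end
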